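/- arXiv:math/0501373 — 3 statements merged into one kernel-verified Lean document; each statement's English description precedes it below -/
import Mathlib

section
/- Let L be a bounded lattice and let a be a central element of L that is an atom of the center Cen(L). Then the interval [0,a] is directly indecomposable (i.e., it is not isomorphic to a direct product of two lattices each having more than one element). -/
/-!
Write `c` for the element of `[0, a]` corresponding to `(⊤, ⊥)` under a decomposition
`[0, a] ≃ A × B`; it is central in `[0, a]`. Since `a` is neutral, `x ↦ (a ⊓ x, a ⊔ x)` embeds
`L` as a sublattice of `[0, a] × [a, 1]`, and there `c` becomes `(c, ⊥)`, which is neutral; so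
`c` is neutral in `L`. If `d` is its complement in `[0, a]` and `b` that of `a` in `L`, then
`d ⊔ b` is a complement of `c` in `L`. Hence `c` is central in `L` and lies below the atom `a`
of the centre, so `c = 0` (and `A` is trivial) or `c = a` (and `B` is trivial).
-/

universe u

/-- An element `a` of a lattice is *neutral* if every triple `{a, x, y}`
generates a distributive sublattice; we use the standard equational
characterization. -/
def IsNeutral {L : Type*} [Lattice L] (a : L) : Prop :=
  ∀ x y : L, (a ⊔ x) ⊓ (a ⊔ y) ⊓ (x ⊔ y) = (a ⊓ x) ⊔ (a ⊓ y) ⊔ (x ⊓ y)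

/-- An element of a bounded lattice is *central* if it is neutral and complemented. -/
def IsCentral {L : Type*} [Lattice L] [BoundedOrder L] (a : L) : Prop :=
  IsNeutral a ∧ ∃ b : L, a ⊓ b = ⊥ ∧ a ⊔ b = ⊤

/-- `a` is an atom of the center `Cen L`. -/
def IsCenterAtom {L : Type*} [Lattice L] [BoundedOrder L] (a : L) : Prop :=
  IsCentral a ∧ a ≠ ⊥ ∧ ∀ b : L, IsCentral b → b < a → b = ⊥

/-- A bounded lattice is *directly indecomposable* if whenever it is isomorphic to a
product of two bounded lattices, one of the factors is trivial. -/
def DirectlyIndecomposable (M : Type u) [Lattice M] [BoundedOrder M] : Prop :=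
  ∀ A B : BddLat.{u}, Nonempty (M ≃o ↥A × ↥B) → Subsingleton ↥A ∨ Subsingleton ↥B

/-- A bounded lattice is *totally decomposable* if it is isomorphic to a direct product
of directly indecomposable lattices. -/
def TotallyDecomposable (M : Type u) [Lattice M] [BoundedOrder M] : Prop :=
  ∃ (ι : Type u) (F : ι → BddLat.{u}),
    (∀ i, DirectlyIndecomposable ↥(F i)) ∧ Nonempty (M ≃o ∀ i, ↥(F i))

section Neutral

variable {L : Type*} [Lattice L] {a : L}

lemma IsNeutral.dual (ha : IsNeutral a) : IsNeutral (OrderDual.toDual a) :=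
  fun x y => (ha (OrderDual.ofDual x) (OrderDual.ofDual y)).symm

lemma IsNeutral.inf_sup_inf_self (ha : IsNeutral a) (x y : L) :
    a ⊓ (x ⊔ a ⊓ y) = a ⊓ x ⊔ a ⊓ y := by
  have h := ha x (a ⊓ y)
  rw [sup_inf_self, ← inf_assoc, inf_idem, sup_assoc, sup_comm (a ⊓ y), ← sup_assoc,
    sup_eq_left.2 (le_inf (inf_le_right.trans inf_le_left) inf_le_left : x ⊓ (a ⊓ y) ≤ a ⊓ x),
    inf_eq_right.2 (le_sup_left : a ≤ a ⊔ x)] at h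
  exact h

lemma IsNeutral.inf_sup_left (ha : IsNeutral a) (x y : L) : a ⊓ (x ⊔ y) = a ⊓ x ⊔ a ⊓ y := by
  refine le_antisymm ?_ (sup_le (inf_le_inf_left _ le_sup_left) (inf_le_inf_left _ le_sup_right))
  have h_le_median : a ⊓ (x ⊔ y) ≤ (a ⊔ x) ⊓ (a ⊔ y) ⊓ (x ⊔ y) :=
    le_inf (le_inf (inf_le_left.trans le_sup_left) (inf_le_left.trans le_sup_left)) inf_le_right
  rw [ha x y, sup_comm (a ⊓ x ⊔ a ⊓ y), ← sup_assoc] at h_le_median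
  calc a ⊓ (x ⊔ y) ≤ a ⊓ (x ⊓ y ⊔ a ⊓ x ⊔ a ⊓ y) := le_inf inf_le_left h_le_median
    _ = a ⊓ x ⊔ a ⊓ y := by
      rw [ha.inf_sup_inf_self, ha.inf_sup_inf_self,
        sup_eq_right.2 (inf_le_inf_left a inf_le_left : a ⊓ (x ⊓ y) ≤ a ⊓ x)]

lemma IsNeutral.sup_inf_left (ha : IsNeutral a) (x y : L) : a ⊔ x ⊓ y = (a ⊔ x) ⊓ (a ⊔ y) :=
  ha.dual.inf_sup_left (OrderDual.toDual x) (OrderDual.toDual y)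

lemma IsNeutral.eq_of_inf_eq_of_sup_eq (ha : IsNeutral a) {x y : L}
    (hinf : x ⊓ a = y ⊓ a) (hsup : x ⊔ a = y ⊔ a) : x = y := by
  have hx : x ⊓ a ≤ x ⊓ y := le_inf inf_le_left (hinf.le.trans inf_le_left)
  have hxy : x ⊔ y ≤ (a ⊔ x) ⊓ (a ⊔ y) :=
    le_inf (sup_le le_sup_right (by rw [sup_comm a x, hsup]; exact le_sup_left))
      (sup_le (by rw [sup_comm a y, ← hsup]; exact le_sup_left) le_sup_right)
  -- under these hypotheses the neutrality identity for `x, y` reads `x ⊔ y = x ⊓ y`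
  have h := ha x y
  rw [inf_eq_right.2 hxy, inf_comm a x, inf_comm a y, ← hinf, sup_idem, sup_eq_right.2 hx] at h
  exact le_antisymm (le_sup_left.trans (h.le.trans inf_le_right))
    (le_sup_right.trans (h.le.trans inf_le_left))

end Neutral

lemma isNeutral_top {L : Type*} [Lattice L] [OrderTop L] : IsNeutral (⊤ : L) := by
  intro x y
  simp only [top_sup_eq, top_inf_eq]
  exact (sup_eq_left.2 (inf_le_left.trans le_sup_left)).symm

lemma isNeutral_bot {L : Type*} [Lattice L] [OrderBot L] : IsNeutral (⊥ : L) :=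
  (isNeutral_top (L := Lᵒᵈ)).dual

lemma IsNeutral.prod {A B : Type*} [Lattice A] [Lattice B] {a : A} {b : B}
    (ha : IsNeutral a) (hb : IsNeutral b) : IsNeutral (a, b) :=
  fun x y => Prod.ext (ha x.1 y.1) (hb x.2 y.2)

section Hom

variable {M N F : Type*} [Lattice M] [Lattice N] [FunLike F M N] [LatticeHomClass F M N]

lemma IsNeutral.of_map {f : F} (hf : Function.Injective f) {e : M} (h : IsNeutral (f e)) :
    IsNeutral e :=
  fun x y => hf (by simpa only [map_inf, map_sup] using h (f x) (f y))

lemma IsNeutral.map {f : F} (hf : Function.Surjective f) {e : M} (h : IsNeutral e) :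
    IsNeutral (f e) := by
  intro x y
  obtain ⟨x, rfl⟩ := hf x
  obtain ⟨y, rfl⟩ := hf y
  simpa only [map_inf, map_sup] using congrArg f (h x y)

end Hom

lemma IsCentral.map {M N : Type*} [Lattice M] [BoundedOrder M] [Lattice N] [BoundedOrder N]
    (φ : M ≃o N) {e : M} (h : IsCentral e) : IsCentral (φ e) := by
  obtain ⟨hn, b, hinf, hsup⟩ := h
  exact ⟨hn.map φ.surjective, φ b, by rw [← map_inf, hinf, map_bot], by rw [← map_sup, hsup, map_top]⟩

lemma isCentral_top_bot {A B : Type*} [Lattice A] [BoundedOrder A] [Lattice B] [BoundedOrder B] :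
    IsCentral ((⊤, ⊥) : A × B) :=
  ⟨isNeutral_top.prod isNeutral_bot, (⊥, ⊤), Prod.ext (inf_bot_eq ⊤) (bot_inf_eq ⊤),
    Prod.ext (top_sup_eq ⊥) (sup_top_eq ⊥)⟩

section Interval

variable {L : Type*} [Lattice L]

def IsNeutral.splitHom [OrderBot L] {a : L} (ha : IsNeutral a) :
    LatticeHom L (Set.Icc ⊥ a × Set.Ici a) where
  toFun x := (⟨a ⊓ x, bot_le, inf_le_left⟩, ⟨a ⊔ x, le_sup_left⟩)
  map_sup' x y := Prod.ext (Subtype.ext (ha.inf_sup_left x y))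
    (Subtype.ext (sup_sup_distrib_left a x y))
  map_inf' x y := Prod.ext (Subtype.ext (inf_inf_distrib_left a x y))
    (Subtype.ext (ha.sup_inf_left x y))

lemma IsNeutral.splitHom_injective [OrderBot L] {a : L} (ha : IsNeutral a) :
    Function.Injective ha.splitHom := fun x y h =>
  have hinf : a ⊓ x = a ⊓ y := congrArg (fun p => (p.1 : L)) h
  have hsup : a ⊔ x = a ⊔ y := congrArg (fun p => (p.2 : L)) h
  ha.eq_of_inf_eq_of_sup_eq (by rw [inf_comm, hinf, inf_comm]) (by rw [sup_comm, hsup, sup_comm])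

lemma IsNeutral.coe_of_Icc [OrderBot L] {a : L} (ha : IsNeutral a) {c : Set.Icc ⊥ a}
    (hc : IsNeutral c) : IsNeutral (c : L) := by
  have hsplit : ha.splitHom c = (c, ⊥) :=
    Prod.ext (Subtype.ext (inf_eq_right.2 c.2.2)) (Subtype.ext (sup_eq_left.2 c.2.2))
  exact IsNeutral.of_map ha.splitHom_injective (hsplit ▸ hc.prod isNeutral_bot)

lemma IsCentral.coe_of_Icc [BoundedOrder L] {a : L} [Fact ((⊥ : L) ≤ a)] (ha : IsCentral a)
    {c : Set.Icc ⊥ a} (hc : IsCentral c) : IsCentral (c : L) := by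
  obtain ⟨hna, b, hab, hab'⟩ := ha
  obtain ⟨hnc, d, hcd, hcd'⟩ := hc
  have hcd : (c : L) ⊓ d = ⊥ := congrArg Subtype.val hcd
  have hcd' : (c : L) ⊔ d = a := congrArg Subtype.val hcd'
  refine ⟨hna.coe_of_Icc hnc, (d : L) ⊔ b, ?_, by rw [← sup_assoc, hcd', hab']⟩
  calc (c : L) ⊓ ((d : L) ⊔ b) = (c : L) ⊓ (a ⊓ ((d : L) ⊔ b)) := by
        rw [← inf_assoc, inf_eq_left.2 c.2.2]
    _ = ⊥ := by rw [hna.inf_sup_left, hab, sup_bot_eq, inf_eq_right.2 d.2.2, hcd]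

end Interval

/-- If `a` is a central element of a bounded lattice `L` that is an atom of the
center `Cen L`, then the interval `[0, a]` is directly indecomposable. -/
theorem Icc_directlyIndecomposable {L : Type u} [Lattice L] [BoundedOrder L] (a : L)
    (ha : IsCenterAtom a) :
    haveI : Fact ((⊥ : L) ≤ a) := ⟨bot_le⟩
    DirectlyIndecomposable (Set.Icc (⊥ : L) a) := by
  have : Fact ((⊥ : L) ≤ a) := ⟨bot_le⟩
  rintro A B ⟨φ⟩
  obtain ⟨hcen, -, hmin⟩ := ha
  set c := φ.symm (⊤, ⊥)
  have hc : IsCentral (c : L) := hcen.coe_of_Icc (isCentral_top_bot.map φ.symm)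
  rcases c.2.2.eq_or_lt with hca | hca
  · right
    have hc_top : c = ⊤ := Subtype.ext hca
    rw [map_eq_top_iff] at hc_top
    exact subsingleton_of_bot_eq_top (congrArg Prod.snd hc_top)
  · left
    have hc_bot : c = ⊥ := Subtype.ext (hmin _ hc hca)
    rw [map_eq_bot_iff] at hc_bot
    exact subsingleton_of_bot_eq_top (congrArg Prod.fst hc_bot).symm
end

section
/- Let L be a bounded lattice that is finitely spatial and dually finitely spatial (finitely bi-spatial). Let a, b ∈ L such that: (a) every join-irreducible p ≤ 1 satisfies p ≤ a or p ≤ b, and every join-irreducible p with (p ≤ a or p ≤ b) satisfies p ≤ 1 (i.e., a ∨* b = 1); and (b) dually, every meet-irreducible u with 0 ≤ u satisfies a ≤ u or b ≤ u (i.e., a ∧* b = 0). Then (a,b) is a complementary pair of central elements of L, and L ≅ [0,a] × [0,b]. -/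
universe u

/-- A lattice is *finitely spatial* if every element is the join of the
join-irreducible elements below it. -/
def FinitelySpatial (L : Type*) [Lattice L] : Prop :=
  ∀ x : L, IsLUB {p : L | SupIrred p ∧ p ≤ x} x

/-- A lattice is *dually finitely spatial* if every element is the meet of the
meet-irreducible elements above it. -/
def DuallyFinitelySpatial (L : Type*) [Lattice L] : Prop :=
  ∀ x : L, IsGLB {u : L | InfIrred u ∧ x ≤ u} x

/-!
The hypotheses say that every join-irreducible lies below `a` or below `b`, and every
meet-irreducible lies above `a` or above `b`. By finite spatiality the first gives
`x = (x ⊓ a) ⊔ (x ⊓ b)`; by dual finite spatiality the second gives `(s ⊔ t) ⊓ a = s` and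
`(s ⊔ t) ⊓ b = t` for `s ≤ a`, `t ≤ b`. Hence `x ↦ (x ⊓ a, x ⊓ b)` is an order isomorphism
`L ≃ [⊥, a] × [⊥, b]` sending `a` to `(⊤, ⊥)`, which is neutral in the product.
-/

section Neutral

variable {α β : Type*} [Lattice α] [Lattice β]

theorem isNeutral_top_s8 [OrderTop α] : IsNeutral (⊤ : α) := by
  intro x y
  simp

theorem isNeutral_bot_s8 [OrderBot α] : IsNeutral (⊥ : α) := by
  intro x y
  simp

theorem IsNeutral.prod_s8 {a : α} {b : β} (ha : IsNeutral a) (hb : IsNeutral b) :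
    IsNeutral (a, b) :=
  fun x y => Prod.ext (ha x.1 y.1) (hb x.2 y.2)

theorem IsNeutral.of_orderIso (e : α ≃o β) {a : α} (h : IsNeutral (e a)) : IsNeutral a := by
  intro x y
  apply e.injective
  simpa only [map_sup, map_inf] using h (e x) (e y)

end Neutral

structure IsDirectDecomposition {L : Type*} [Lattice L] (a b : L) : Prop where
  inf_sup_inf (x : L) : x ⊓ a ⊔ x ⊓ b = x
  sup_inf_left {s t : L} : s ≤ a → t ≤ b → (s ⊔ t) ⊓ a = s
  sup_inf_right {s t : L} : s ≤ a → t ≤ b → (s ⊔ t) ⊓ b = t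

namespace IsDirectDecomposition

variable {L : Type*} [Lattice L] {a b : L}

theorem symm (h : IsDirectDecomposition a b) : IsDirectDecomposition b a where
  inf_sup_inf x := by rw [sup_comm, h.inf_sup_inf]
  sup_inf_left ht hs := by rw [sup_comm, h.sup_inf_right hs ht]
  sup_inf_right ht hs := by rw [sup_comm, h.sup_inf_left hs ht]

variable [BoundedOrder L] (h : IsDirectDecomposition a b)
include h

theorem inf_eq_bot : a ⊓ b = ⊥ := by
  simpa only [bot_sup_eq, inf_comm] using h.sup_inf_left bot_le le_rfl

theorem sup_eq_top : a ⊔ b = ⊤ := by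
  simpa only [top_inf_eq] using h.inf_sup_inf ⊤

def orderIso : L ≃o Set.Icc (⊥ : L) a × Set.Icc (⊥ : L) b where
  toFun x := (⟨x ⊓ a, bot_le, inf_le_right⟩, ⟨x ⊓ b, bot_le, inf_le_right⟩)
  invFun st := st.1.1 ⊔ st.2.1
  left_inv := h.inf_sup_inf
  right_inv := fun ⟨⟨s, hs⟩, ⟨t, ht⟩⟩ =>
    Prod.ext (Subtype.ext (h.sup_inf_left hs.2 ht.2)) (Subtype.ext (h.sup_inf_right hs.2 ht.2))
  map_rel_iff' {x y} := by
    refine ⟨fun hxy => ?_, fun hxy => ⟨inf_le_inf_right a hxy, inf_le_inf_right b hxy⟩⟩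
    calc x = x ⊓ a ⊔ x ⊓ b := (h.inf_sup_inf x).symm
      _ ≤ y ⊓ a ⊔ y ⊓ b := sup_le_sup hxy.1 hxy.2
      _ = y := h.inf_sup_inf y

theorem isNeutral : IsNeutral a := by
  have : Fact ((⊥ : L) ≤ a) := ⟨bot_le⟩
  have : Fact ((⊥ : L) ≤ b) := ⟨bot_le⟩
  refine IsNeutral.of_orderIso h.orderIso ?_
  have ha : h.orderIso a = (⊤, ⊥) :=
    Prod.ext (Subtype.ext (inf_idem a)) (Subtype.ext h.inf_eq_bot)
  rw [ha]
  exact isNeutral_top_s8.prod_s8 isNeutral_bot_s8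

theorem isCentral : IsCentral a :=
  ⟨h.isNeutral, b, h.inf_eq_bot, h.sup_eq_top⟩

end IsDirectDecomposition

section Spatial

variable {L : Type*} [Lattice L] {a b : L}

theorem FinitelySpatial.inf_sup_inf_eq (hFS : FinitelySpatial L)
    (hab : ∀ p : L, SupIrred p → p ≤ a ∨ p ≤ b) (x : L) : x ⊓ a ⊔ x ⊓ b = x := by
  refine le_antisymm (sup_le inf_le_left inf_le_left) ((hFS x).2 ?_)
  rintro p ⟨hp, hpx⟩
  rcases hab p hp with hpa | hpb
  · exact le_sup_of_le_left (le_inf hpx hpa)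
  · exact le_sup_of_le_right (le_inf hpx hpb)

theorem DuallyFinitelySpatial.sup_inf_eq_left (hDFS : DuallyFinitelySpatial L)
    (hab : ∀ u : L, InfIrred u → a ≤ u ∨ b ≤ u) {s t : L} (hs : s ≤ a) (ht : t ≤ b) :
    (s ⊔ t) ⊓ a = s := by
  refine le_antisymm ((hDFS s).2 ?_) (le_inf le_sup_left hs)
  rintro u ⟨hu, hsu⟩
  rcases hab u hu with hau | hbu
  · exact inf_le_right.trans hau
  · exact inf_le_left.trans (sup_le hsu (ht.trans hbu))

theorem IsDirectDecomposition.of_spatial (hFS : FinitelySpatial L)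
    (hDFS : DuallyFinitelySpatial L) (hsup : ∀ p : L, SupIrred p → p ≤ a ∨ p ≤ b)
    (hinf : ∀ u : L, InfIrred u → a ≤ u ∨ b ≤ u) : IsDirectDecomposition a b where
  inf_sup_inf := hFS.inf_sup_inf_eq hsup
  sup_inf_left := hDFS.sup_inf_eq_left hinf
  sup_inf_right hs ht := by
    rw [sup_comm]
    exact hDFS.sup_inf_eq_left (fun u hu => (hinf u hu).symm) ht hs

end Spatial

/-- In a finitely bi-spatial bounded lattice, if `a ∨* b = 1` and `a ∧* b = 0`,
then `(a, b)` is a complementary pair of central elements and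
`L ≅ [0,a] × [0,b]`. -/
theorem central_complementary_of_star {L : Type u} [Lattice L] [BoundedOrder L]
    (hFS : FinitelySpatial L) (hDFS : DuallyFinitelySpatial L) (a b : L)
    (hsup : ∀ p : L, SupIrred p → (p ≤ (⊤ : L) ↔ p ≤ a ∨ p ≤ b))
    (hinf : ∀ u : L, InfIrred u → ((⊥ : L) ≤ u ↔ a ≤ u ∨ b ≤ u)) :
    haveI : Fact ((⊥ : L) ≤ a) := ⟨bot_le⟩
    haveI : Fact ((⊥ : L) ≤ b) := ⟨bot_le⟩
    IsCentral a ∧ IsCentral b ∧ a ⊓ b = ⊥ ∧ a ⊔ b = ⊤ ∧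
      Nonempty (L ≃o Set.Icc (⊥ : L) a × Set.Icc (⊥ : L) b) := by
  have h : IsDirectDecomposition a b :=
    .of_spatial hFS hDFS (fun p hp => (hsup p hp).mp le_top) (fun u hu => (hinf u hu).mp bot_le)
  exact ⟨h.isCentral, h.symm.isCentral, h.inf_eq_bot, h.sup_eq_top, ⟨h.orderIso⟩⟩
end

section
/- Every finitely bi-spatial complete lattice is isomorphic to a direct product of directly indecomposable lattices. -/
universe u

/-!
Call two join-irreducibles of `L` adjacent when some meet-irreducible lies above neither, and
let `eᵢ` be the join of the `i`-th connected component of this graph. A meet-irreducible that is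
not above some member of component `i` is above every other component, so spatiality on both
sides gives `x = ⨆ᵢ x ⊓ eᵢ` and `(⨆ⱼ uⱼ) ⊓ eᵢ = uᵢ` whenever `uⱼ ≤ eⱼ`; hence `L ≅ Πᵢ [⊥, eᵢ]`.
In a product `A × B` a join-irreducible lies in one factor, a meet-irreducible in one cofactor,
and a join-irreducible not below a meet-irreducible lies on the same side as it. So adjacency
never crosses a splitting of `[⊥, eᵢ]`, and connectedness of the component makes `[⊥, eᵢ]`
directly indecomposable.
-/

open Set

theorem SupIrred.map_orderIso {α β : Type*} [SemilatticeSup α] [SemilatticeSup β] (f : α ≃o β)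
    {a : α} (ha : SupIrred a) : SupIrred (f a) := by
  refine ⟨f.isMin_apply.not.2 ha.1, fun b c hbc => ?_⟩
  have := ha.2 (show f.symm b ⊔ f.symm c = a by rw [← f.symm.map_sup, hbc, f.symm_apply_apply])
  simpa only [f.symm_apply_eq] using this

theorem InfIrred.map_orderIso {α β : Type*} [SemilatticeInf α] [SemilatticeInf β] (f : α ≃o β)
    {a : α} (ha : InfIrred a) : InfIrred (f a) := by
  refine ⟨f.isMax_apply.not.2 ha.1, fun b c hbc => ?_⟩
  have := ha.2 (show f.symm b ⊓ f.symm c = a by rw [← f.symm.map_inf, hbc, f.symm_apply_apply])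
  simpa only [f.symm_apply_eq] using this

theorem SupIrred.Iic_mk {α : Type*} [SemilatticeSup α] {a e : α} (ha : SupIrred a)
    (h : a ≤ e) : SupIrred (⟨a, h⟩ : Iic e) :=
  ⟨fun hmin => ha.1 fun b hb => hmin (show (⟨b, hb.trans h⟩ : Iic e) ≤ ⟨a, h⟩ from hb),
    fun _ _ hbc => (ha.2 (congrArg Subtype.val hbc)).imp Subtype.ext Subtype.ext⟩

theorem SupIrred.fst_eq_bot_or_snd_eq_bot {A B : Type*} [SemilatticeSup A] [OrderBot A]
    [SemilatticeSup B] [OrderBot B] {x : A × B} (hx : SupIrred x) : x.1 = ⊥ ∨ x.2 = ⊥ :=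
  (hx.2 (show (x.1, ⊥) ⊔ (⊥, x.2) = x by ext <;> simp)).symm.imp
    (fun h => (congrArg Prod.fst h).symm) (fun h => (congrArg Prod.snd h).symm)

theorem InfIrred.fst_eq_top_or_snd_eq_top {A B : Type*} [SemilatticeInf A] [OrderTop A]
    [SemilatticeInf B] [OrderTop B] {x : A × B} (hx : InfIrred x) : x.1 = ⊤ ∨ x.2 = ⊤ :=
  (hx.2 (show (x.1, ⊤) ⊓ (⊤, x.2) = x by ext <;> simp)).symm.imp
    (fun h => (congrArg Prod.fst h).symm) (fun h => (congrArg Prod.snd h).symm)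

theorem SupIrred.snd_eq_bot_iff_of_not_le_infIrred {A B : Type*} [Lattice A] [BoundedOrder A]
    [Lattice B] [BoundedOrder B] {x w : A × B} (hx : SupIrred x) (hw : InfIrred w)
    (hxw : ¬x ≤ w) : x.2 = ⊥ ↔ w.2 = ⊤ := by
  constructor
  · intro hx2
    exact hw.fst_eq_top_or_snd_eq_top.resolve_left fun hw1 => hxw ⟨hw1 ▸ le_top, hx2 ▸ bot_le⟩
  · intro hw2
    exact hx.fst_eq_bot_or_snd_eq_bot.resolve_left fun hx1 => hxw ⟨hx1 ▸ bot_le, hw2 ▸ le_top⟩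

theorem InfIrred.apply_of_forall_ne_eq_top {ι : Type*} {X : ι → Type*}
    [∀ j, SemilatticeInf (X j)] [∀ j, OrderTop (X j)] {x : ∀ j, X j} (hx : InfIrred x) {i : ι}
    (htop : ∀ j ≠ i, x j = ⊤) : InfIrred (x i) := by
  classical
  refine ⟨fun hmax => hx.ne_top (funext fun j => ?_), fun b c hbc => ?_⟩
  · by_cases hj : j = i
    · subst hj; exact isMax_iff_eq_top.1 hmax
    · exact htop j hj
  · have hsplit : Function.update x i b ⊓ Function.update x i c = x := by
      funext j
      by_cases hj : j = i
      · subst hj; simpa using hbc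
      · simp [Function.update_of_ne hj]
    exact (hx.2 hsplit).imp (fun h => by simpa using congrFun h i)
      (fun h => by simpa using congrFun h i)

section Spatial

variable {L : Type*} [CompleteLattice L]

theorem exists_supIrred_le (hFS : FinitelySpatial L) {x : L} (hx : x ≠ ⊥) :
    ∃ p : L, SupIrred p ∧ p ≤ x := by
  by_contra! h
  exact hx (le_bot_iff.1 ((hFS x).2 fun p hp => absurd hp.2 (h p hp.1)))

theorem exists_infIrred_not_le (hDFS : DuallyFinitelySpatial L) {p : L} (hp : SupIrred p) :
    ∃ w : L, InfIrred w ∧ ¬p ≤ w := by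
  by_contra! h
  exact hp.ne_bot (le_bot_iff.1 ((hDFS ⊥).2 fun w hw => h w hw.1))

theorem exists_supIrred_le_snd_eq_bot (hFS : FinitelySpatial L) {e : L} {A B : Type*}
    [Lattice A] [BoundedOrder A] [Nontrivial A] [Lattice B] [BoundedOrder B]
    (Ψ : Iic e ≃o A × B) : ∃ (p : L) (hp : p ≤ e), SupIrred p ∧ (Ψ ⟨p, hp⟩).2 = ⊥ := by
  have ht : (Ψ.symm (⊤, ⊥) : L) ≠ ⊥ := by
    intro h
    have := congrArg Ψ (Subtype.ext h : Ψ.symm (⊤, ⊥) = ⊥)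
    rw [Ψ.apply_symm_apply, Ψ.map_bot] at this
    exact top_ne_bot (congrArg Prod.fst this)
  obtain ⟨p, hp, hpt⟩ := exists_supIrred_le hFS ht
  refine ⟨p, hpt.trans (Ψ.symm (⊤, ⊥)).2, hp, le_bot_iff.1 ?_⟩
  simpa using (Ψ.monotone (show ⟨p, _⟩ ≤ Ψ.symm (⊤, ⊥) from hpt)).2

end Spatial

def IrredAdj (L : Type*) [Lattice L] (p q : {p : L // SupIrred p}) : Prop :=
  ∃ w : L, InfIrred w ∧ ¬p.1 ≤ w ∧ ¬q.1 ≤ w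

theorem IrredAdj.symm {L : Type*} [Lattice L] {p q : {p : L // SupIrred p}} :
    IrredAdj L p q → IrredAdj L q p
  | ⟨w, hw, hpw, hqw⟩ => ⟨w, hw, hqw, hpw⟩

def IrredComponent (L : Type*) [Lattice L] : Type _ := Quot (IrredAdj L)

namespace IrredComponent

variable {L : Type u} [CompleteLattice L]

def of (p : {p : L // SupIrred p}) : IrredComponent L := Quot.mk _ p

def sup (i : IrredComponent L) : L := ⨆ (p) (_ : of p = i), p.1

theorem le_sup (p : {p : L // SupIrred p}) : p.1 ≤ (of p).sup :=
  le_iSup₂ (f := fun q (_ : of q = of p) => q.1) p rfl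

theorem sup_le_of_not_le {w : L} (hw : InfIrred w) {p : {p : L // SupIrred p}} (hpw : ¬p.1 ≤ w)
    {j : IrredComponent L} (hj : j ≠ of p) : j.sup ≤ w :=
  iSup₂_le fun _ hq => by_contra fun hqw => hj (hq ▸ Quot.sound ⟨w, hw, hqw, hpw⟩)

theorem of_eq_of_le_sup (hDFS : DuallyFinitelySpatial L) {p : {p : L // SupIrred p}}
    {i : IrredComponent L} (h : p.1 ≤ i.sup) : of p = i := by
  by_contra hne
  obtain ⟨w, hw, hpw⟩ := exists_infIrred_not_le hDFS p.2
  exact hpw (h.trans (sup_le_of_not_le hw hpw (Ne.symm hne)))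

theorem iSup_inf_sup (hFS : FinitelySpatial L) (x : L) :
    ⨆ i : IrredComponent L, x ⊓ i.sup = x := by
  refine le_antisymm (iSup_le fun _ => inf_le_left) ((hFS x).2 ?_)
  rintro p ⟨hp, hpx⟩
  exact (le_inf hpx (le_sup ⟨p, hp⟩)).trans (le_iSup (fun i => x ⊓ sup i) (of ⟨p, hp⟩))

theorem iSup_inf_sup_of_le (hDFS : DuallyFinitelySpatial L) {u : IrredComponent L → L}
    (hu : ∀ j, u j ≤ j.sup) (i : IrredComponent L) : (⨆ j, u j) ⊓ i.sup = u i := by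
  refine le_antisymm ((hDFS (u i)).2 ?_) (le_inf (le_iSup u i) (hu i))
  rintro w ⟨hw, hui⟩
  by_cases hcomp : ∃ p, of p = i ∧ ¬p.1 ≤ w
  · obtain ⟨p, rfl, hpw⟩ := hcomp
    refine inf_le_of_left_le (iSup_le fun j => ?_)
    by_cases hj : j = of p
    · exact hj ▸ hui
    · exact (hu j).trans (sup_le_of_not_le hw hpw hj)
  · push Not at hcomp
    exact inf_le_of_right_le (iSup₂_le hcomp)

noncomputable def orderIsoPi (hFS : FinitelySpatial L) (hDFS : DuallyFinitelySpatial L) :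
    L ≃o ∀ i : IrredComponent L, Iic i.sup where
  toFun x i := ⟨x ⊓ i.sup, inf_le_right⟩
  invFun u := ⨆ i, (u i : L)
  left_inv := iSup_inf_sup hFS
  right_inv u := funext fun i => Subtype.ext (iSup_inf_sup_of_le hDFS (fun j => (u j).2) i)
  map_rel_iff' {x y} := by
    refine ⟨fun h => ?_, fun h i => inf_le_inf_right _ h⟩
    rw [← iSup_inf_sup hFS x, ← iSup_inf_sup hFS y]
    exact iSup_mono h

theorem infIrred_inf_sup (hFS : FinitelySpatial L) (hDFS : DuallyFinitelySpatial L) {w : L}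
    (hw : InfIrred w) {p : {p : L // SupIrred p}} (hpw : ¬p.1 ≤ w) :
    InfIrred (⟨w ⊓ (of p).sup, inf_le_right⟩ : Iic (of p).sup) :=
  (hw.map_orderIso (orderIsoPi hFS hDFS)).apply_of_forall_ne_eq_top fun _ hj =>
    Subtype.ext (inf_eq_right.2 (sup_le_of_not_le hw hpw hj))

theorem snd_eq_bot_iff_of_irredAdj (hFS : FinitelySpatial L) (hDFS : DuallyFinitelySpatial L)
    {i : IrredComponent L} {A B : Type*} [Lattice A] [BoundedOrder A] [Lattice B] [BoundedOrder B]
    (Ψ : Iic i.sup ≃o A × B) {p q : {p : L // SupIrred p}} (hpq : IrredAdj L p q)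
    (hp : p.1 ≤ i.sup) (hq : q.1 ≤ i.sup) : (Ψ ⟨p, hp⟩).2 = ⊥ ↔ (Ψ ⟨q, hq⟩).2 = ⊥ := by
  obtain ⟨w, hw, hpw, hqw⟩ := hpq
  obtain rfl := of_eq_of_le_sup hDFS hp
  have hW := (infIrred_inf_sup hFS hDFS hw hpw).map_orderIso Ψ
  have not_le : ∀ r : L, ∀ hr : r ≤ (of p).sup, ¬r ≤ w → ¬Ψ ⟨r, hr⟩ ≤ Ψ ⟨w ⊓ _, inf_le_right⟩ :=
    fun _ _ hrw h => hrw ((Subtype.mk_le_mk.1 (Ψ.le_iff_le.1 h)).trans inf_le_left)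
  rw [(p.2.Iic_mk hp).map_orderIso Ψ |>.snd_eq_bot_iff_of_not_le_infIrred hW (not_le _ hp hpw),
    (q.2.Iic_mk hq).map_orderIso Ψ |>.snd_eq_bot_iff_of_not_le_infIrred hW (not_le _ hq hqw)]

theorem directlyIndecomposable_Iic_sup (hFS : FinitelySpatial L)
    (hDFS : DuallyFinitelySpatial L) (i : IrredComponent L) :
    DirectlyIndecomposable (Iic i.sup) := by
  rintro A B ⟨Ψ⟩
  by_contra! ⟨hA, hB⟩
  let onA : {p : L // SupIrred p} → Prop := fun p => ∃ hp : p.1 ≤ i.sup, (Ψ ⟨p, hp⟩).2 = ⊥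
  have onA_of_adj : ∀ p q, IrredAdj L p q → onA p → onA q := by
    rintro p q hpq ⟨hp, hpA⟩
    have hq : q.1 ≤ i.sup := (Quot.sound hpq).symm.trans (of_eq_of_le_sup hDFS hp) ▸ le_sup q
    exact ⟨hq, (snd_eq_bot_iff_of_irredAdj hFS hDFS Ψ hpq hp hq).1 hpA⟩
  let componentOnA : IrredComponent L → Prop :=
    Quot.lift onA fun p q h => propext ⟨onA_of_adj p q h, onA_of_adj q p h.symm⟩
  obtain ⟨p, hpe, hp, hpA⟩ := exists_supIrred_le_snd_eq_bot hFS Ψ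
  obtain ⟨q, hqe, hq, hqB⟩ := exists_supIrred_le_snd_eq_bot hFS (Ψ.trans OrderIso.prodComm)
  have hpq : of ⟨p, hp⟩ = of ⟨q, hq⟩ :=
    (of_eq_of_le_sup hDFS hpe).trans (of_eq_of_le_sup hDFS hqe).symm
  obtain ⟨_, hqA⟩ : onA ⟨q, hq⟩ := (congrArg componentOnA hpq).mp ⟨hpe, hpA⟩
  exact ((hq.Iic_mk hqe).map_orderIso Ψ).ne_bot (Prod.ext hqB hqA)

end IrredComponent

/-- Every finitely bi-spatial complete lattice is isomorphic to a direct product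
of directly indecomposable lattices. -/
theorem totallyDecomposable_of_finitelyBiSpatial {L : Type u} [CompleteLattice L]
    (hFS : FinitelySpatial L) (hDFS : DuallyFinitelySpatial L) :
    TotallyDecomposable L :=
  ⟨IrredComponent L, fun i => BddLat.of (Iic i.sup),
    IrredComponent.directlyIndecomposable_Iic_sup hFS hDFS, ⟨IrredComponent.orderIsoPi hFS hDFS⟩⟩
end
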